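/- arXiv:0904.1608 — 6 statements merged into one kernel-verified Lean document; each statement's English description precedes it below -/
import Mathlib

section
/- Let p and q be distinct primes with q ≡ 3 (mod 8), and let r be an integer with q dividing r² + p. In the quaternion algebra B = ℍ(−p, −q), for all integers x, y, z, the reduced norm of the element v = x·β + y·(α + αβ) + (z/q)·(rβ + αβ) equals q(x − ry)² + ((r² + p)/q)(z + qy)² + p·y² + 2r(x − ry)(z + qy). -/
open Quaternion

/-!
In the basis `1, α, β, αβ` the element `v` has coordinates `(0, y, x + rz/q, y + z/q)`, so its
reduced norm is `p y² + q (x + rz/q)² + pq (y + z/q)²`. In the variables `u = x - ry`,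
`w = z + qy` one has `x + rz/q = u + rw/q` and `y + z/q = w/q`; expanding gives the formula.
-/

/-- The reduced trace of a quaternion: `tr v = v + star v` (as a scalar). -/
def trd {c₁ c₂ : ℚ} (v : ℍ[ℚ, c₁, c₂]) : ℚ := (v + star v).re

/-- The reduced norm of a quaternion: `nrd v = v * star v` (as a scalar). -/
def nrd {c₁ c₂ : ℚ} (v : ℍ[ℚ, c₁, c₂]) : ℚ := (v * star v).re

theorem nrd_eq {c₁ c₂ : ℚ} (v : ℍ[ℚ, c₁, c₂]) :
    nrd v = v.re ^ 2 - c₁ * v.imI ^ 2 - c₂ * v.imJ ^ 2 + c₁ * c₂ * v.imK ^ 2 := by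
  simp only [nrd, QuaternionAlgebra.re_mul, QuaternionAlgebra.re_star, QuaternionAlgebra.imI_star,
    QuaternionAlgebra.imJ_star, QuaternionAlgebra.imK_star]
  ring

theorem ternary_form_change_of_variables {K : Type*} [Field K] {q : K} (hq : q ≠ 0)
    (p r x y z : K) :
    p * y ^ 2 + q * (x + z / q * r) ^ 2 + p * q * (y + z / q) ^ 2 =
      q * (x - r * y) ^ 2 + (r ^ 2 + p) / q * (z + q * y) ^ 2 + p * y ^ 2 +
        2 * r * (x - r * y) * (z + q * y) := by
  field_simp
  ring

theorem reduced_norm_formula_general (p q : ℕ) (hq : q.Prime) (r : ℤ) (x y z : ℤ) :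
    letI α : ℍ[ℚ, -(p : ℚ), -(q : ℚ)] := ⟨0, 1, 0, 0⟩
    letI β : ℍ[ℚ, -(p : ℚ), -(q : ℚ)] := ⟨0, 0, 1, 0⟩
    letI v : ℍ[ℚ, -(p : ℚ), -(q : ℚ)] :=
      (x : ℚ) • β + (y : ℚ) • (α + α * β) + ((z : ℚ) / (q : ℚ)) • ((r : ℚ) • β + α * β)
    nrd v = (q : ℚ) * ((x : ℚ) - (r : ℚ) * (y : ℚ)) ^ 2 +
      (((r : ℚ) ^ 2 + (p : ℚ)) / (q : ℚ)) * ((z : ℚ) + (q : ℚ) * (y : ℚ)) ^ 2 +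
      (p : ℚ) * (y : ℚ) ^ 2 +
      2 * (r : ℚ) * ((x : ℚ) - (r : ℚ) * (y : ℚ)) * ((z : ℚ) + (q : ℚ) * (y : ℚ)) := by
  rw [nrd_eq, ← ternary_form_change_of_variables (Nat.cast_ne_zero.mpr hq.ne_zero)]
  simp only [QuaternionAlgebra.smul_mk, QuaternionAlgebra.mk_mul_mk, QuaternionAlgebra.mk_add_mk,
    smul_eq_mul]
  ring

theorem reduced_norm_formula (p q : ℕ) (hp : p.Prime) (hq : q.Prime) (hpq : p ≠ q)
    (hq8 : q % 8 = 3) (r : ℤ) (hdvd : (q : ℤ) ∣ r ^ 2 + (p : ℤ)) (x y z : ℤ) :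
    letI α : ℍ[ℚ, -(p : ℚ), -(q : ℚ)] := ⟨0, 1, 0, 0⟩
    letI β : ℍ[ℚ, -(p : ℚ), -(q : ℚ)] := ⟨0, 0, 1, 0⟩
    letI v : ℍ[ℚ, -(p : ℚ), -(q : ℚ)] :=
      (x : ℚ) • β + (y : ℚ) • (α + α * β) + ((z : ℚ) / (q : ℚ)) • ((r : ℚ) • β + α * β)
    nrd v = (q : ℚ) * ((x : ℚ) - (r : ℚ) * (y : ℚ)) ^ 2 +
      (((r : ℚ) ^ 2 + (p : ℚ)) / (q : ℚ)) * ((z : ℚ) + (q : ℚ) * (y : ℚ)) ^ 2 +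
      (p : ℚ) * (y : ℚ) ^ 2 +
      2 * (r : ℚ) * ((x : ℚ) - (r : ℚ) * (y : ℚ)) * ((z : ℚ) + (q : ℚ) * (y : ℚ)) :=
  reduced_norm_formula_general p q hq r x y z
end

section
/- Let p and q be distinct primes with q ≡ 3 (mod 8), and let r be an integer with q dividing r² + p. Then the set of reduced norms of elements of the Gross lattice of R(q,r) in B = ℍ(−p, −q) is exactly the set of rationals of the form q·a² + ((r² + p)/q)·b² + p·c² + 2r·a·b, where a, b, c range over integers with b ≡ c (mod 2). -/
open Quaternion

/-- `α` in `B = ℍ(-p, -q)`, with `α² = -p`. -/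
def qa (p q : ℕ) : ℍ[ℚ, -(p : ℚ), -(q : ℚ)] := ⟨0, 1, 0, 0⟩

/-- `β` in `B = ℍ(-p, -q)`, with `β² = -q`. -/
def qb (p q : ℕ) : ℍ[ℚ, -(p : ℚ), -(q : ℚ)] := ⟨0, 0, 1, 0⟩

/-- The ℤ-lattice `R(q,r)` spanned by `1, (1+β)/2, α(1+β)/2, (r+α)β/q`. -/
def Rqr (p q : ℕ) (r : ℤ) : Submodule ℤ ℍ[ℚ, -(p : ℚ), -(q : ℚ)] :=
  Submodule.span ℤ
    ({1, ((2 : ℚ)⁻¹) • (1 + qb p q), ((2 : ℚ)⁻¹) • (qa p q * (1 + qb p q)),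
      ((q : ℚ)⁻¹) • (((r : ℚ) • (1 : ℍ[ℚ, -(p : ℚ), -(q : ℚ)]) + qa p q) * qb p q)} :
      Set ℍ[ℚ, -(p : ℚ), -(q : ℚ)])

/-- The Gross lattice `{x ∈ ℤ + 2R : tr(x) = 0}` of a ℤ-lattice `R` in `ℍ(-p,-q)`. -/
def GrossLattice (p q : ℕ) (R : Submodule ℤ ℍ[ℚ, -(p : ℚ), -(q : ℚ)]) :
    Set ℍ[ℚ, -(p : ℚ), -(q : ℚ)] :=
  {v | (∃ n : ℤ, ∃ u ∈ R, v = (n : ℍ[ℚ, -(p : ℚ), -(q : ℚ)]) + 2 • u) ∧ trd v = 0}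


/-! The trace condition kills the integral part, so the Gross lattice of `R(q,r)` consists of the
pure quaternions `c α + (b + 2dr/q) β + (c + 2d/q) αβ` with `b, c, d ∈ ℤ`. Substituting
`a = b - rc` and `B = qc + 2d`, which for odd `q` runs over all pairs with `B ≡ c (mod 2)`, they
become `c α + (a + rB/q) β + (B/q) αβ`, whose reduced norm `p c² + q y² + p q z²` expands to
`q a² + ((r² + p)/q) B² + p c² + 2r a B`. -/

section Coordinates

variable {c₁ c₂ : ℚ}

theorem trd_eq_two_mul_re (v : ℍ[ℚ, c₁, c₂]) : trd v = 2 * v.re := by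
  simp only [trd, QuaternionAlgebra.re_add, QuaternionAlgebra.re_star, zero_mul, add_zero]
  ring

theorem nrd_mk (w x y z : ℚ) :
    nrd (⟨w, x, y, z⟩ : ℍ[ℚ, c₁, c₂]) = w ^ 2 - c₁ * x ^ 2 - c₂ * y ^ 2 + c₁ * c₂ * z ^ 2 := by
  simp only [nrd, QuaternionAlgebra.star_mk, QuaternionAlgebra.re_mul, zero_mul, add_zero]
  ring

theorem intCast_add_two_smul_mk (n : ℤ) (w x y z : ℚ) :
    (n : ℍ[ℚ, c₁, c₂]) + 2 • ⟨w, x, y, z⟩ = ⟨n + 2 * w, 2 * x, 2 * y, 2 * z⟩ := by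
  ext <;> simp [two_smul, two_mul]

end Coordinates

section Rqr

variable (p q : ℕ) (r : ℤ)

theorem mem_Rqr_iff (u : ℍ[ℚ, -(p : ℚ), -(q : ℚ)]) :
    u ∈ Rqr p q r ↔ ∃ a b c d : ℤ,
      u = ⟨a + b / 2, c / 2, b / 2 + d * r / q, c / 2 + d / q⟩ := by
  simp only [Rqr, Submodule.mem_span_insert, Submodule.mem_span_singleton]
  constructor
  · rintro ⟨a, _, ⟨b, _, ⟨c, _, ⟨d, rfl⟩, rfl⟩, rfl⟩, rfl⟩
    refine ⟨a, b, c, d, ?_⟩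
    ext <;> simp [qa, qb] <;> ring
  · rintro ⟨a, b, c, d, rfl⟩
    refine ⟨a, _, ⟨b, _, ⟨c, _, ⟨d, rfl⟩, rfl⟩, rfl⟩, ?_⟩
    ext <;> simp [qa, qb] <;> ring

theorem mem_grossLattice_Rqr_iff (v : ℍ[ℚ, -(p : ℚ), -(q : ℚ)]) :
    v ∈ GrossLattice p q (Rqr p q r) ↔ ∃ b c d : ℤ,
      v = ⟨0, c, b + 2 * d * r / q, c + 2 * d / q⟩ := by
  simp only [GrossLattice, Set.mem_ofPred_eq, mem_Rqr_iff]
  constructor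
  · rintro ⟨⟨n, _, ⟨a, b, c, d, rfl⟩, rfl⟩, htr⟩
    rw [intCast_add_two_smul_mk] at htr ⊢
    rw [trd_eq_two_mul_re] at htr
    refine ⟨b, c, d, ?_⟩
    ext
    case re => dsimp only at htr ⊢; linarith
    all_goals dsimp only; ring
  · rintro ⟨b, c, d, rfl⟩
    refine ⟨⟨-b, _, ⟨0, b, c, d, rfl⟩, ?_⟩, by rw [trd_eq_two_mul_re, mul_zero]⟩
    rw [intCast_add_two_smul_mk]
    ext <;> (push_cast; ring)

theorem mem_grossLattice_Rqr_iff_of_odd (hq : Odd q) (v : ℍ[ℚ, -(p : ℚ), -(q : ℚ)]) :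
    v ∈ GrossLattice p q (Rqr p q r) ↔ ∃ a b c : ℤ, b % 2 = c % 2 ∧
      v = ⟨0, c, a + r * b / q, b / q⟩ := by
  obtain ⟨k, hk⟩ := hq
  have hq0 : (q : ℚ) ≠ 0 := by rw [hk]; positivity
  have hqc (c : ℤ) : (q : ℤ) * c = c + 2 * (k * c) := by rw [hk]; push_cast; ring
  rw [mem_grossLattice_Rqr_iff]
  constructor
  · rintro ⟨b, c, d, rfl⟩
    refine ⟨b - r * c, q * c + 2 * d, c, by have := hqc c; omega, ?_⟩
    ext
    case imJ => push_cast; field_simp; ring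
    all_goals push_cast; field_simp
  · rintro ⟨a, b, c, hbc, rfl⟩
    obtain ⟨d, hd⟩ : ∃ d, b = q * c + 2 * d := ⟨(b - c) / 2 - k * c, by have := hqc c; omega⟩
    refine ⟨a + r * c, c, d, ?_⟩
    subst hd
    ext
    case imJ => push_cast; field_simp; ring
    all_goals push_cast; field_simp

theorem nrd_mk_zero_add_mul_div_div {q : ℕ} (hq0 : (q : ℚ) ≠ 0) (a b c : ℚ) :
    nrd (⟨0, c, a + r * b / q, b / q⟩ : ℍ[ℚ, -(p : ℚ), -(q : ℚ)]) =
      q * a ^ 2 + ((r ^ 2 + p) / q) * b ^ 2 + p * c ^ 2 + 2 * r * a * b := by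
  rw [nrd_mk]
  field_simp
  ring

end Rqr

theorem gross_lattice_norms_Rqr_general (p q : ℕ)
    (hq8 : q % 8 = 3) (r : ℤ) :
    {t : ℚ | ∃ v ∈ GrossLattice p q (Rqr p q r), nrd v = t} =
      {t : ℚ | ∃ a b c : ℤ, b % 2 = c % 2 ∧
        t = (q : ℚ) * (a : ℚ) ^ 2 + (((r : ℚ) ^ 2 + (p : ℚ)) / (q : ℚ)) * (b : ℚ) ^ 2 +
          (p : ℚ) * (c : ℚ) ^ 2 + 2 * (r : ℚ) * (a : ℚ) * (b : ℚ)} := by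
  have hodd : Odd q := Nat.odd_iff.mpr (by omega)
  have hq0 : (q : ℚ) ≠ 0 := by exact_mod_cast hodd.pos.ne'
  ext t
  simp only [Set.mem_ofPred_eq, mem_grossLattice_Rqr_iff_of_odd p q r hodd]
  constructor
  · rintro ⟨_, ⟨a, b, c, hbc, rfl⟩, rfl⟩
    exact ⟨a, b, c, hbc, nrd_mk_zero_add_mul_div_div p r hq0 a b c⟩
  · rintro ⟨a, b, c, hbc, rfl⟩
    exact ⟨_, ⟨a, b, c, hbc, rfl⟩, nrd_mk_zero_add_mul_div_div p r hq0 a b c⟩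

theorem gross_lattice_norms_Rqr (p q : ℕ) (hp : p.Prime) (hq : q.Prime) (hpq : p ≠ q)
    (hq8 : q % 8 = 3) (r : ℤ) (hdvd : (q : ℤ) ∣ r ^ 2 + (p : ℤ)) :
    {t : ℚ | ∃ v ∈ GrossLattice p q (Rqr p q r), nrd v = t} =
      {t : ℚ | ∃ a b c : ℤ, b % 2 = c % 2 ∧
        t = (q : ℚ) * (a : ℚ) ^ 2 + (((r : ℚ) ^ 2 + (p : ℚ)) / (q : ℚ)) * (b : ℚ) ^ 2 +
          (p : ℚ) * (c : ℚ) ^ 2 + 2 * (r : ℚ) * (a : ℚ) * (b : ℚ)} :=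
  gross_lattice_norms_Rqr_general p q hq8 r
end

section
/- Let p and q be distinct primes with p ≡ 3 (mod 4) and q ≡ 3 (mod 8), and let r' be an integer with 4q dividing (r')² + p. In B = ℍ(−p, −q), every element of the form v = x·α + y·β + (z/(2q))·(r'β + αβ) with x, y, z ∈ ℤ lies in R'(q,r') and has reduced trace 0, its reduced norm equals p·x² + q·y² + (((r')² + p)/(4q))·z² + r'·y·z, and conversely every element of R'(q,r') with reduced trace 0 is of this form. -/
open Quaternion

/-- The ℤ-lattice `R'(q,r')` spanned by `1, (1+α)/2, β, (r'+α)β/(2q)`. -/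
def Rqr' (p q : ℕ) (r' : ℤ) : Submodule ℤ ℍ[ℚ, -(p : ℚ), -(q : ℚ)] :=
  Submodule.span ℤ
    ({1, ((2 : ℚ)⁻¹) • (1 + qa p q), qb p q,
      ((2 * q : ℚ)⁻¹) • (((r' : ℚ) • (1 : ℍ[ℚ, -(p : ℚ), -(q : ℚ)]) + qa p q) * qb p q)} :
      Set ℍ[ℚ, -(p : ℚ), -(q : ℚ)])

set_option maxHeartbeats 1000000 in
theorem trace_zero_elements_Rqr' (p q : ℕ) (hp : p.Prime) (hq : q.Prime) (hpq : p ≠ q)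
    (hp4 : p % 4 = 3) (hq8 : q % 8 = 3) (r' : ℤ)
    (hdvd : (4 * q : ℤ) ∣ r' ^ 2 + (p : ℤ)) :
    (∀ x y z : ℤ,
      letI v : ℍ[ℚ, -(p : ℚ), -(q : ℚ)] :=
        (x : ℚ) • qa p q + (y : ℚ) • qb p q +
          ((z : ℚ) / (2 * q : ℚ)) • ((r' : ℚ) • qb p q + qa p q * qb p q)
      v ∈ Rqr' p q r' ∧ trd v = 0 ∧
        nrd v = (p : ℚ) * (x : ℚ) ^ 2 + (q : ℚ) * (y : ℚ) ^ 2 +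
          (((r' : ℚ) ^ 2 + (p : ℚ)) / (4 * q : ℚ)) * (z : ℚ) ^ 2 +
          (r' : ℚ) * (y : ℚ) * (z : ℚ)) ∧
    (∀ v ∈ Rqr' p q r', trd v = 0 → ∃ x y z : ℤ,
      v = (x : ℚ) • qa p q + (y : ℚ) • qb p q +
        ((z : ℚ) / (2 * q : ℚ)) • ((r' : ℚ) • qb p q + qa p q * qb p q)) := by
  have hq0 : (q : ℚ) ≠ 0 := Nat.cast_ne_zero.mpr hq.ne_zero
  have cast : ∀ (n : ℤ) (w : ℍ[ℚ, -(p : ℚ), -(q : ℚ)]), n • w = (n : ℚ) • w :=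
    fun n w => (Int.cast_smul_eq_zsmul ℚ n w).symm
  constructor
  · intro x y z
    refine ⟨?_, ?_, ?_⟩
    · have h1 : (1 : ℍ[ℚ, -(p : ℚ), -(q : ℚ)]) ∈ Rqr' p q r' :=
        Submodule.subset_span (by simp [Set.mem_insert_iff])
      have h2 : ((2 : ℚ)⁻¹) • (1 + qa p q) ∈ Rqr' p q r' :=
        Submodule.subset_span (by simp [Set.mem_insert_iff])
      have h3 : qb p q ∈ Rqr' p q r' :=
        Submodule.subset_span (by simp [Set.mem_insert_iff])
      have h4 : ((2 * q : ℚ)⁻¹) • (((r' : ℚ) • (1 : ℍ[ℚ, -(p : ℚ), -(q : ℚ)]) + qa p q) * qb p q)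
          ∈ Rqr' p q r' :=
        Submodule.subset_span (by simp [Set.mem_insert_iff])
      have key : (x : ℚ) • qa p q + (y : ℚ) • qb p q +
          ((z : ℚ) / (2 * q : ℚ)) • ((r' : ℚ) • qb p q + qa p q * qb p q) =
          (-x) • (1 : ℍ[ℚ, -(p : ℚ), -(q : ℚ)]) + (2 * x) • (((2 : ℚ)⁻¹) • (1 + qa p q)) +
          y • qb p q +
          z • (((2 * q : ℚ)⁻¹) • (((r' : ℚ) • (1 : ℍ[ℚ, -(p : ℚ), -(q : ℚ)]) + qa p q) * qb p q)) := by
        rw [cast, cast, cast, cast]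
        push_cast
        ext <;> simp [qa, qb] <;> (first | ring | tauto | (left; ring))
      rw [key]
      exact add_mem (add_mem (add_mem (Submodule.smul_mem _ _ h1) (Submodule.smul_mem _ _ h2))
        (Submodule.smul_mem _ _ h3)) (Submodule.smul_mem _ _ h4)
    · simp [trd, qa, qb]
    · simp only [nrd, qa, qb]
      simp
      field_simp
      ring
  · intro v hv htr
    rw [Rqr', Submodule.mem_span_insert] at hv
    obtain ⟨a, w, hw, rfl⟩ := hv
    rw [Submodule.mem_span_insert] at hw
    obtain ⟨b, w2, hw2, rfl⟩ := hw
    rw [Submodule.mem_span_insert] at hw2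
    obtain ⟨c, w3, hw3, rfl⟩ := hw2
    rw [Submodule.mem_span_singleton] at hw3
    obtain ⟨d, rfl⟩ := hw3
    rw [cast a, cast b, cast c, cast d] at htr ⊢
    simp only [trd, qa, qb] at htr
    simp at htr
    have htr2 : (a : ℚ) + b * (1 / 2) = 0 := by rw [one_div]; exact htr
    have htr3 : (b : ℚ) * (1 / 2) = -a := by linarith
    refine ⟨-a, c, d, ?_⟩
    push_cast
    ext
    case re => simp [qa, qb]; exact htr
    case imI => simp [qa, qb]; linarith [htr]
    all_goals (simp [qa, qb] <;> (first | ring | tauto | (left; ring)))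
end

section
/- Let p and q be distinct primes with p ≡ 3 (mod 4) and q ≡ 3 (mod 8), and let r' be an integer with 4q dividing (r')² + p. Then the set of reduced norms of elements of the Gross lattice of R'(q,r') in B = ℍ(−p, −q) is exactly the set of rationals of the form p·x² + 4q·y² + (((r')² + p)/q)·z² + 4r'·y·z, where x, y, z range over the integers. -/
open Quaternion

/-! For `u = a + b(1+α)/2 + cβ + d(r'+α)β/(2q)` in `R'(q,r')`, the trace condition on `n + 2u`
forces `n = -2a - b`, so the Gross lattice is exactly `{bα + (2c + dr'/q)β + (d/q)αβ : b, c, d ∈ ℤ}`.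
Its reduced norm `pb² + q(2c + dr'/q)² + pq(d/q)²` expands to the ternary form. -/

namespace QuaternionAlgebra

variable {c₁ c₂ : ℚ}

theorem trd_eq (v : ℍ[ℚ, c₁, c₂]) : trd v = 2 * v.re := by
  simp [trd, two_mul]

theorem nrd_mk (w x y z : ℚ) :
    nrd (⟨w, x, y, z⟩ : ℍ[ℚ, c₁, c₂]) = w ^ 2 - c₁ * x ^ 2 - c₂ * y ^ 2 + c₁ * c₂ * z ^ 2 := by
  simp only [nrd, star_mk, mk_mul_mk]
  ring

variable {p q : ℕ} {r' : ℤ}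

theorem Rqr'_generator_combination_eq (a b c d : ℤ) :
    a • (1 : ℍ[ℚ, -(p : ℚ), -(q : ℚ)]) + (b • ((2 : ℚ)⁻¹ • (1 + qa p q)) + (c • qb p q +
      d • ((2 * q : ℚ)⁻¹ • (((r' : ℚ) • (1 : ℍ[ℚ, -(p : ℚ), -(q : ℚ)]) + qa p q) * qb p q)))) =
      ⟨a + b / 2, b / 2, c + d * r' / (2 * q), d / (2 * q)⟩ := by
  ext <;> simp only [qa, qb, zsmul_eq_mul, mul_one, smul_add, smul_mk, smul_eq_mul, mul_zero,
      Algebra.mul_smul_comm, smul_zero, mul_inv_rev, re_add, re_intCast, re_smul, re_mul, re_one,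
      imI_add, imI_smul, imI_one, imI_intCast, imI_mul, imJ_add, imJ_smul, imJ_one, imJ_intCast,
      imJ_mul, imK_add, imK_smul, imK_one, imK_intCast, imK_mul, zero_add, add_zero, mul_neg,
      zero_mul, neg_zero, neg_mul, neg_neg, sub_self, sub_zero] <;> ring

theorem mem_Rqr'_iff {u : ℍ[ℚ, -(p : ℚ), -(q : ℚ)]} :
    u ∈ Rqr' p q r' ↔ ∃ a b c d : ℤ,
      u = ⟨a + b / 2, b / 2, c + d * r' / (2 * q), d / (2 * q)⟩ := by
  simp only [Rqr', Submodule.mem_span_insert, Submodule.mem_span_singleton]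
  constructor
  · rintro ⟨a, _, ⟨b, _, ⟨c, _, ⟨d, rfl⟩, rfl⟩, rfl⟩, rfl⟩
    exact ⟨a, b, c, d, Rqr'_generator_combination_eq a b c d⟩
  · rintro ⟨a, b, c, d, rfl⟩
    exact ⟨a, _, ⟨b, _, ⟨c, _, ⟨d, rfl⟩, rfl⟩, rfl⟩, (Rqr'_generator_combination_eq a b c d).symm⟩

theorem mem_grossLattice_Rqr'_iff {v : ℍ[ℚ, -(p : ℚ), -(q : ℚ)]} :
    v ∈ GrossLattice p q (Rqr' p q r') ↔ ∃ x y z : ℤ,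
      v = ⟨0, x, 2 * y + z * r' / q, z / q⟩ := by
  simp only [GrossLattice, Set.mem_ofPred_eq, mem_Rqr'_iff, trd_eq]
  constructor
  · rintro ⟨⟨n, _, ⟨a, b, c, d, rfl⟩, rfl⟩, htr⟩
    refine ⟨b, c, d, ?_⟩
    ext
    · simp only [re_add, re_intCast, re_smul] at htr ⊢
      linarith
    all_goals simp only [imI_add, imJ_add, imK_add, imI_intCast, imJ_intCast, imK_intCast,
      imI_smul, imJ_smul, imK_smul]; ring
  · rintro ⟨x, y, z, rfl⟩
    refine ⟨⟨-x, _, ⟨0, x, y, z, rfl⟩, ?_⟩, by simp⟩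
    ext <;> simp only [re_add, imI_add, imJ_add, imK_add, re_intCast, imI_intCast, imJ_intCast,
      imK_intCast, re_smul, imI_smul, imJ_smul, imK_smul] <;> push_cast <;> ring

theorem nrd_mk_mem_grossLattice_Rqr' (hq : (q : ℚ) ≠ 0) (x y z : ℤ) :
    nrd (⟨0, x, 2 * y + z * r' / q, z / q⟩ : ℍ[ℚ, -(p : ℚ), -(q : ℚ)]) =
      p * x ^ 2 + 4 * q * y ^ 2 + (r' ^ 2 + p) / q * z ^ 2 + 4 * r' * y * z := by
  rw [nrd_mk]
  field_simp
  ring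

end QuaternionAlgebra

open QuaternionAlgebra

theorem gross_lattice_norms_Rqr'_general (p q : ℕ) (hq : q.Prime) (r' : ℤ) :
    {t : ℚ | ∃ v ∈ GrossLattice p q (Rqr' p q r'), nrd v = t} =
      {t : ℚ | ∃ x y z : ℤ,
        t = (p : ℚ) * (x : ℚ) ^ 2 + (4 * q : ℚ) * (y : ℚ) ^ 2 +
          (((r' : ℚ) ^ 2 + (p : ℚ)) / (q : ℚ)) * (z : ℚ) ^ 2 +
          (4 * r' : ℚ) * (y : ℚ) * (z : ℚ)} := by
  have hq0 : (q : ℚ) ≠ 0 := Nat.cast_ne_zero.mpr hq.ne_zero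
  ext t
  simp only [Set.mem_ofPred_eq, mem_grossLattice_Rqr'_iff]
  constructor
  · rintro ⟨_, ⟨x, y, z, rfl⟩, rfl⟩
    exact ⟨x, y, z, nrd_mk_mem_grossLattice_Rqr' hq0 x y z⟩
  · rintro ⟨x, y, z, rfl⟩
    exact ⟨_, ⟨x, y, z, rfl⟩, nrd_mk_mem_grossLattice_Rqr' hq0 x y z⟩

theorem gross_lattice_norms_Rqr' (p q : ℕ) (hp : p.Prime) (hq : q.Prime) (hpq : p ≠ q)
    (hp4 : p % 4 = 3) (hq8 : q % 8 = 3) (r' : ℤ)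
    (hdvd : (4 * q : ℤ) ∣ r' ^ 2 + (p : ℤ)) :
    {t : ℚ | ∃ v ∈ GrossLattice p q (Rqr' p q r'), nrd v = t} =
      {t : ℚ | ∃ x y z : ℤ,
        t = (p : ℚ) * (x : ℚ) ^ 2 + (4 * q : ℚ) * (y : ℚ) ^ 2 +
          (((r' : ℚ) ^ 2 + (p : ℚ)) / (q : ℚ)) * (z : ℚ) ^ 2 +
          (4 * r' : ℚ) * (y : ℚ) * (z : ℚ)} :=
  gross_lattice_norms_Rqr'_general p q hq r'
end

section
/- A positive integer n is represented by the integral ternary quadratic form Q(x,y,z) = 4x² + 11y² + 12z² + 4xz if and only if 121·n is represented by Q. -/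
/-- An integer `n` is represented by an integral ternary quadratic form `Q`. -/
def Represents (Q : ℤ → ℤ → ℤ → ℤ) (n : ℤ) : Prop :=
  ∃ x y z : ℤ, Q x y z = n

lemma zmod11_sq_add_sq (a b : ZMod 11) (h : a ^ 2 + b ^ 2 = 0) : a = 0 ∧ b = 0 := by
  revert h; revert a b; decide

theorem rep_iff_rep_121 (n : ℤ) (hn : 0 < n) :
    Represents (fun x y z => 4 * x ^ 2 + 11 * y ^ 2 + 12 * z ^ 2 + 4 * x * z) n ↔
      Represents (fun x y z => 4 * x ^ 2 + 11 * y ^ 2 + 12 * z ^ 2 + 4 * x * z) (121 * n) := by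
  constructor
  · rintro ⟨x, y, z, h⟩
    exact ⟨11 * x, 11 * y, 11 * z, by simp only; linear_combination 121 * h⟩
  · rintro ⟨x, y, z, h⟩
    simp only at h
    have key : (2 * x + z) ^ 2 + 11 * (y ^ 2 + z ^ 2) = 121 * n := by linear_combination h
    have h11 : (11 : ℤ) ∣ (2 * x + z) := by
      have hp : Prime (11 : ℤ) := by norm_num
      refine hp.dvd_of_dvd_pow (n := 2) ?_
      exact ⟨11 * n - (y ^ 2 + z ^ 2), by linear_combination key⟩
    obtain ⟨v, hv⟩ := h11
    have hyz : y ^ 2 + z ^ 2 = 11 * (n - v ^ 2) := by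
      have h2 : (11 : ℤ) * (y ^ 2 + z ^ 2) = 11 * (11 * (n - v ^ 2)) := by
        linear_combination key - (2 * x + z + 11 * v) * hv
      exact mul_left_cancel₀ (by norm_num) h2
    have hz0 : ((y : ZMod 11)) ^ 2 + ((z : ZMod 11)) ^ 2 = 0 := by
      have := congrArg (fun t : ℤ => (t : ZMod 11)) hyz
      push_cast at this
      rw [this, show ((11 : ZMod 11)) = 0 from by decide]
      ring
    obtain ⟨hy0, hz0'⟩ := zmod11_sq_add_sq _ _ hz0
    have hy11 : (11 : ℤ) ∣ y := by
      exact_mod_cast (ZMod.intCast_zmod_eq_zero_iff_dvd y 11).mp hy0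
    have hz11 : (11 : ℤ) ∣ z := by
      exact_mod_cast (ZMod.intCast_zmod_eq_zero_iff_dvd z 11).mp hz0'
    obtain ⟨a, ha⟩ := hy11
    obtain ⟨b, hb⟩ := hz11
    have hab : 11 * (a ^ 2 + b ^ 2) = n - v ^ 2 := by
      have h3 : (11 : ℤ) * (11 * (a ^ 2 + b ^ 2)) = 11 * (n - v ^ 2) := by
        linear_combination hyz - (y + 11 * a) * ha - (z + 11 * b) * hb
      exact mul_left_cancel₀ (by norm_num) h3
    have hpar : (2 : ℤ) ∣ (v - b) := by
      have h2 : (2 : ℤ) ∣ 11 * (v - b) := ⟨x, by linarith [hv, hb]⟩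
      rcases Int.prime_two.dvd_mul.mp h2 with h' | h'
      · norm_num at h'
      · exact h'
    obtain ⟨c, hc⟩ := hpar
    refine ⟨c, a, b, ?_⟩
    simp only
    linear_combination hab - (2 * c + b + v) * hc
end

section
/- Let χ be a Dirichlet character modulo m, let s be a complex number with σ := Re(s) > 1, and let N₀ ≥ 1 be an integer. Then −2·log |L(χ, s)| + 2·Σ_{n=2}^{N₀} Re( χ(n)·Λ(n) / (n^s · log n) ) ≤ 2·( log ζ(σ) − Σ_{n=2}^{N₀} Λ(n) / (n^σ · log n) ), where ζ denotes the Riemann zeta function (which is real and greater than 1 at real σ > 1). -/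
/-!
Expanding each factor `-log (1 - χ(p) p^{-s})` of the Euler product into its Taylor series
gives `log L(χ, s) = ∑ χ(n) Λ(n) / (n^s log n)`, and likewise `log ζ(σ) = ∑ Λ(n) / (n^σ log n)`.
The `n`-th term of the second series dominates the modulus of the `n`-th term of the first, so
the series of `Re (χ(n) Λ(n) / (n^s log n)) + Λ(n) / (n^σ log n)` has nonnegative terms; its
partial sum over `2 ≤ n ≤ N₀` is therefore at most its sum `log |L(χ, s)| + log ζ(σ)`.
-/

open ArithmeticFunction Complex

lemma ArithmeticFunction.vonMangoldt_div_mul_log_le_inv {x : ℝ} (hx : 0 ≤ x) (n : ℕ) :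
    Λ n / (x * Real.log n) ≤ x⁻¹ := by
  rcases (Real.log_natCast_nonneg n).eq_or_lt with hlog | hlog
  · simp [← hlog, inv_nonneg.mpr hx]
  · rw [mul_comm, ← div_div, div_eq_mul_inv _ x]
    exact mul_le_of_le_one_left (inv_nonneg.mpr hx) ((div_le_one hlog).mpr vonMangoldt_le_log)

namespace DirichletCharacter

variable {m : ℕ} (χ : DirichletCharacter ℂ m)

lemma norm_mul_vonMangoldt_div_le (s : ℂ) (n : ℕ) :
    ‖χ n * (Λ n : ℂ) / ((n : ℂ) ^ s * (Real.log n : ℂ))‖ ≤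
      Λ n / ((n : ℝ) ^ s.re * Real.log n) := by
  rcases n.eq_zero_or_pos with rfl | hn
  · simp
  rw [norm_div, norm_mul, norm_mul, norm_natCast_cpow_of_pos hn,
    Complex.norm_of_nonneg vonMangoldt_nonneg, Complex.norm_of_nonneg (Real.log_natCast_nonneg n)]
  gcongr
  exact mul_le_of_le_one_left vonMangoldt_nonneg (χ.norm_le_one n)

lemma mul_vonMangoldt_div_prime_pow {p : ℕ} (hp : p.Prime) (s : ℂ) (k : ℕ) :
    χ ↑(p ^ (k + 1)) * (Λ (p ^ (k + 1)) : ℂ) /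
        (((p ^ (k + 1) : ℕ) : ℂ) ^ s * (Real.log ↑(p ^ (k + 1)) : ℂ)) =
      (χ p * (p : ℂ) ^ (-s)) ^ (k + 1) / (k + 1) := by
  have hlog : log (p : ℂ) ≠ 0 := by
    rw [← natCast_log]
    exact ofReal_ne_zero.mpr (Real.log_pos (mod_cast hp.one_lt)).ne'
  have hps : (p : ℂ) ^ s ≠ 0 := by simp [hp.ne_zero]
  simp only [vonMangoldt_apply_pow k.succ_ne_zero, vonMangoldt_apply_prime hp, Nat.cast_pow,
    map_pow, Real.log_pow, ← natCast_cpow_natCast_mul, cpow_nat_mul, cpow_neg]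
  push_cast
  field_simp
  rw [div_pow, mul_div_cancel₀ _ (pow_ne_zero _ hps)]

lemma hasSum_mul_vonMangoldt_div_prime_pow {p : ℕ} (hp : p.Prime) {s : ℂ} (hs : 0 < s.re) :
    HasSum (fun k : ℕ ↦ χ ↑(p ^ (k + 1)) * (Λ (p ^ (k + 1)) : ℂ) /
        (((p ^ (k + 1) : ℕ) : ℂ) ^ s * (Real.log ↑(p ^ (k + 1)) : ℂ)))
      (-log (1 - χ p * (p : ℂ) ^ (-s))) := by
  simp only [χ.mul_vonMangoldt_div_prime_pow hp]
  refine hasSum_taylorSeries_neg_log' ?_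
  calc ‖χ p * (p : ℂ) ^ (-s)‖ ≤ ‖(p : ℂ) ^ (-s)‖ := by
        rw [norm_mul]; exact mul_le_of_le_one_left (norm_nonneg _) (χ.norm_le_one _)
    _ = (p : ℝ) ^ (-s.re) := by rw [norm_natCast_cpow_of_pos hp.pos, neg_re]
    _ < 1 := Real.rpow_lt_one_of_one_lt_of_neg (mod_cast hp.one_lt) (neg_lt_zero.mpr hs)

lemma hasSum_mul_vonMangoldt_div {s : ℂ} (hs : 1 < s.re) :
    HasSum (fun n : ℕ ↦ χ n * (Λ n : ℂ) / ((n : ℂ) ^ s * (Real.log n : ℂ)))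
      (∑' p : Nat.Primes, -log (1 - χ p * (p : ℂ) ^ (-s))) := by
  have hsum : Summable fun n : ℕ ↦ χ n * (Λ n : ℂ) / ((n : ℂ) ^ s * (Real.log n : ℂ)) :=
    (Real.summable_nat_rpow_inv.mpr hs).of_norm_bounded fun n ↦
      (χ.norm_mul_vonMangoldt_div_le s n).trans (vonMangoldt_div_mul_log_le_inv (by positivity) n)
  have hsupp : Function.support (fun n : ℕ ↦ χ n * (Λ n : ℂ) / ((n : ℂ) ^ s * (Real.log n : ℂ)))
      ⊆ {n | IsPrimePow n} := fun n hn ↦ by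
    by_contra h
    exact hn (by simp [vonMangoldt_eq_zero_iff.mpr h])
  convert hsum.hasSum using 1
  rw [tsum_eq_tsum_primes_of_support_subset_prime_powers hsum hsupp]
  exact tsum_congr fun p ↦
    (χ.hasSum_mul_vonMangoldt_div_prime_pow p.prop (by linarith)).tsum_eq.symm

lemma hasSum_re_mul_vonMangoldt_div {s : ℂ} (hs : 1 < s.re) :
    HasSum (fun n : ℕ ↦ (χ n * (Λ n : ℂ) / ((n : ℂ) ^ s * (Real.log n : ℂ))).re)
      (Real.log ‖LSeries (fun n ↦ χ n) s‖) := by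
  rw [← LSeries_eulerProduct_exp_log χ hs, norm_exp, Real.log_exp]
  exact hasSum_re (χ.hasSum_mul_vonMangoldt_div hs)

end DirichletCharacter

lemma hasSum_vonMangoldt_div_rpow_mul_log {σ : ℝ} (hσ : 1 < σ) :
    HasSum (fun n : ℕ ↦ Λ n / ((n : ℝ) ^ σ * Real.log n)) (Real.log ‖riemannZeta σ‖) := by
  have h := (1 : DirichletCharacter ℂ 1).hasSum_re_mul_vonMangoldt_div (s := σ) (by simpa)
  rw [DirichletCharacter.LSeries_modOne_eq, LSeries_one_eq_riemannZeta (by simpa)] at h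
  convert h using 2 with n
  rw [MulChar.one_apply (isUnit_of_subsingleton _), one_mul, ← ofReal_natCast,
    ← ofReal_cpow n.cast_nonneg, ← ofReal_mul, ← ofReal_div, ofReal_re]

theorem tail_log_bound_general (m : ℕ) (χ : DirichletCharacter ℂ m) (s : ℂ) (hs : 1 < s.re)
    (N₀ : ℕ) :
    -2 * Real.log (‖LSeries (fun n => χ n) s‖) +
        2 * ∑ n ∈ Finset.Icc 2 N₀, (χ n * (Λ n : ℂ) / ((n : ℂ) ^ s * (Real.log n : ℂ))).re ≤
      2 * (Real.log (‖riemannZeta (s.re : ℂ)‖) -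
        ∑ n ∈ Finset.Icc 2 N₀, Λ n / ((n : ℝ) ^ s.re * Real.log n)) := by
  have hχ := χ.hasSum_re_mul_vonMangoldt_div hs
  have hζ := hasSum_vonMangoldt_div_rpow_mul_log hs
  have hpartial := sum_le_hasSum (Finset.Icc 2 N₀) (fun n _ ↦ ?_) (hχ.add hζ)
  · rw [Finset.sum_add_distrib] at hpartial
    linarith
  · have := neg_le_of_abs_le ((abs_re_le_norm _).trans (χ.norm_mul_vonMangoldt_div_le s n))
    linarith

theorem tail_log_bound (m : ℕ) (χ : DirichletCharacter ℂ m) (s : ℂ) (hs : 1 < s.re)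
    (N₀ : ℕ) (hN₀ : 1 ≤ N₀) :
    -2 * Real.log (‖LSeries (fun n => χ n) s‖) +
        2 * ∑ n ∈ Finset.Icc 2 N₀, (χ n * (Λ n : ℂ) / ((n : ℂ) ^ s * (Real.log n : ℂ))).re ≤
      2 * (Real.log (‖riemannZeta (s.re : ℂ)‖) -
        ∑ n ∈ Finset.Icc 2 N₀, Λ n / ((n : ℝ) ^ s.re * Real.log n)) :=
  tail_log_bound_general m χ s hs N₀
end
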